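/- arXiv:1412.6610 — 2 statements merged into one kernel-verified Lean document; each statement's English description precedes it below -/
import Mathlib

section
/- For the gated auto-encoder decoder r(y|x) = (W^Y)^T((W^X x) ⊙ (W^H)^T h(W^H((W^X x) ⊙ (W^Y y)))), with h continuously differentiable, the vector field F(y) = r(y|x) - y satisfies Poincaré's integrability criterion: ∂F_i/∂y_j = ∂F_j/∂y_i for all i,j. -/
/-!
Absorbing the gate `Wˣx` into a diagonal factor gives `r(y) = Bᵀ h(B y)` with
`B = Wʰ diag(Wˣx) Wʸ`, so the Jacobian of `F` is `Bᵀ diag(h'(B y)) B - 1`, which is symmetric.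
-/

open Matrix

namespace Matrix

variable {l m n R : Type*}

theorem mulVec_mul_mulVec [Fintype m] [Fintype n] [DecidableEq m] [CommSemiring R]
    (A : Matrix l m R) (a : m → R) (C : Matrix m n R) (v : n → R) :
    A *ᵥ (a * C *ᵥ v) = (A * diagonal a * C) *ᵥ v := by
  rw [← mulVec_mulVec, ← mulVec_mulVec]
  congr 1
  ext k
  simp [mulVec_diagonal]

theorem IsSymm.transpose_mul_mul [Fintype m] [CommSemiring R] {D : Matrix m m R}
    (hD : D.IsSymm) (B : Matrix m n R) : (Bᵀ * D * B).IsSymm := by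
  simp [IsSymm, transpose_mul, hD.eq, Matrix.mul_assoc]

end Matrix

variable {m n : Type*} [Fintype m] [Fintype n] [DecidableEq m] [DecidableEq n]

theorem hasFDerivAt_elementwise {σ : ℝ → ℝ} {v : m → ℝ} (hσ : ∀ k, DifferentiableAt ℝ σ (v k)) :
    HasFDerivAt (fun w : m → ℝ => fun k => σ (w k))
      (toLin' (diagonal fun k => deriv σ (v k))).toContinuousLinearMap v := by
  refine hasFDerivAt_pi'' fun k => ?_
  refine ((hσ k).hasDerivAt.comp_hasFDerivAt v (hasFDerivAt_apply (𝕜 := ℝ) k v)).congr_fderiv ?_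
  ext w
  simp [mulVec_diagonal, mul_comm]

theorem hasFDerivAt_transpose_mulVec_comp_mulVec {σ : ℝ → ℝ} (B : Matrix m n ℝ) {y : n → ℝ}
    (hσ : ∀ k, DifferentiableAt ℝ σ ((B *ᵥ y) k)) :
    HasFDerivAt (fun z => Bᵀ *ᵥ fun k => σ ((B *ᵥ z) k))
      (toLin' (Bᵀ * diagonal (fun k => deriv σ ((B *ᵥ y) k)) * B)).toContinuousLinearMap y := by
  rw [toLin'_mul, toLin'_mul]
  exact (toLin' Bᵀ).toContinuousLinearMap.hasFDerivAt.comp y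
    ((hasFDerivAt_elementwise hσ).comp y (toLin' B).toContinuousLinearMap.hasFDerivAt)

theorem fderiv_single_apply_of_hasFDerivAt {f : (n → ℝ) → n → ℝ} {A : Matrix n n ℝ} {y : n → ℝ}
    (hf : HasFDerivAt f (toLin' A).toContinuousLinearMap y) (i j : n) :
    fderiv ℝ f y (Pi.single j 1) i = A i j := by
  simp [hf.fderiv]

/-- Poincaré integrability criterion for the GAE vector field
`F(y) = r(y|x) - y`, where
`r(y|x) = (Wʸ)ᵀ((Wˣx) ⊙ (Wʰ)ᵀ h(Wʰ((Wˣx) ⊙ (Wʸy))))` and `h` is an elementwise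
continuously differentiable activation. -/
theorem gae_jacobian_symmetric
    (Fn D M : ℕ)
    (WX WY : Matrix (Fin Fn) (Fin D) ℝ) (WH : Matrix (Fin M) (Fin Fn) ℝ)
    (x : Fin D → ℝ) (h : ℝ → ℝ) (hh : ContDiff ℝ 1 h)
    (r : (Fin D → ℝ) → (Fin D → ℝ))
    (hr : ∀ y, r y = WY.transpose.mulVec
      ((WX.mulVec x) * WH.transpose.mulVec
        (fun m => h (WH.mulVec ((WX.mulVec x) * (WY.mulVec y)) m))))
    (F : (Fin D → ℝ) → (Fin D → ℝ))
    (hF : ∀ y, F y = r y - y) :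
    ∀ (y : Fin D → ℝ) (i j : Fin D),
      fderiv ℝ F y (Pi.single j 1) i = fderiv ℝ F y (Pi.single i 1) j := by
  intro y i j
  set B := WH * diagonal (WX *ᵥ x) * WY
  have hFB : F = fun z => Bᵀ *ᵥ (fun k => h ((B *ᵥ z) k)) - z := by
    funext z
    rw [hF, hr, mulVec_mul_mulVec, mulVec_mul_mulVec]
    simp only [B, transpose_mul, diagonal_transpose, Matrix.mul_assoc]
  set J := Bᵀ * diagonal (fun k => deriv h ((B *ᵥ y) k)) * B
  have hJ : HasFDerivAt F (toLin' (J - 1)).toContinuousLinearMap y := by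
    rw [hFB, map_sub, map_sub, toLin'_one]
    exact (hasFDerivAt_transpose_mulVec_comp_mulVec B fun _ =>
      (hh.differentiable one_ne_zero).differentiableAt).sub (hasFDerivAt_id y)
  rw [fderiv_single_apply_of_hasFDerivAt hJ, fderiv_single_apply_of_hasFDerivAt hJ]
  exact (((isSymm_diagonal _).transpose_mul_mul B).sub isSymm_one).apply j i
end

section
/- Define E(y) = Σ_k H(u_k(y)) - ‖y‖²/2 where u(y) = W^H((W^Y y) ⊙ (W^X x)) and H is an antiderivative of the scalar activation h (i.e., H' = h). Then ∇_y E(y) = r(y|x) - y, where r(y|x) = (W^Y)^T((W^X x) ⊙ (W^H)^T h(u(y))). -/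
/-!
Since `(Wʸy) ⊙ a = diag(a) Wʸ y`, the map `y ↦ u(y)` is the linear map of the matrix
`A = Wʰ diag(Wˣx) Wʸ`, and `r(y|x) = Aᵀ h(A y)`. The energy is therefore the separable
potential `Σ_k H(z_k)`, whose gradient is `h(z)`, composed with `A`, minus `‖y‖²/2`, whose
gradient is `y`; the chain rule through a linear map transposes the matrix.
-/

open Matrix

section

variable {l m n R : Type*}

theorem mul_diagonal_mul_mulVec [CommSemiring R] [Fintype l] [Fintype n] [DecidableEq l]
    (B : Matrix m l R) (a : l → R) (C : Matrix l n R) (y : n → R) :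
    (B * diagonal a * C) *ᵥ y = B *ᵥ ((C *ᵥ y) * a) := by
  rw [← mulVec_mulVec, ← mulVec_mulVec]
  congr 1
  ext i
  rw [mulVec_diagonal, Pi.mul_apply, mul_comm]

theorem transpose_mul_diagonal_mul_mulVec [CommSemiring R] [Fintype l] [Fintype m]
    [DecidableEq l] (B : Matrix m l R) (a : l → R) (C : Matrix l n R) (w : m → R) :
    (B * diagonal a * C)ᵀ *ᵥ w = Cᵀ *ᵥ (a * Bᵀ *ᵥ w) := by
  rw [transpose_mul, transpose_mul, diagonal_transpose, ← mulVec_mulVec, ← mulVec_mulVec]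
  congr 1
  ext i
  rw [mulVec_diagonal, Pi.mul_apply]

theorem hasFDerivAt_sum_apply {𝕜 : Type*} [NontriviallyNormedField 𝕜] [Fintype m]
    {H h : 𝕜 → 𝕜} (hH : ∀ t, HasDerivAt H (h t) t) (z : m → 𝕜) :
    HasFDerivAt (fun w : m → 𝕜 => ∑ k, H (w k))
      (∑ k, h (z k) • ContinuousLinearMap.proj (R := 𝕜) (φ := fun _ : m => 𝕜) k) z :=
  HasFDerivAt.fun_sum fun k _ =>
    (hH (z k)).comp_hasFDerivAt z (hasFDerivAt_apply k z)

theorem hasGradientAt_sum_comp_mulVec [Fintype m] [Fintype n] {H h : ℝ → ℝ}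
    (hH : ∀ t, HasDerivAt H (h t) t) (A : Matrix m n ℝ) (y : EuclideanSpace ℝ n) :
    HasGradientAt (fun z : EuclideanSpace ℝ n => ∑ k, H ((A *ᵥ z.ofLp) k))
      (WithLp.toLp 2 (Aᵀ *ᵥ fun k => h ((A *ᵥ y.ofLp) k))) y := by
  let L : EuclideanSpace ℝ n →L[ℝ] (m → ℝ) :=
    A.mulVecLin.toContinuousLinearMap.comp (EuclideanSpace.equiv n ℝ).toContinuousLinearMap
  rw [hasGradientAt_iff_hasFDerivAt]
  refine ((hasFDerivAt_sum_apply hH (L y)).comp y L.hasFDerivAt).congr_fderiv ?_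
  ext v
  simp only [L, InnerProductSpace.toDual_apply_apply, mulVec_transpose,
    EuclideanSpace.inner_eq_star_dotProduct, star_trivial,
    ContinuousLinearMap.coe_comp, Function.comp_apply, FunLike.coe_sum,
    Finset.sum_apply, _root_.smul_apply, ContinuousLinearMap.proj_apply, smul_eq_mul]
  exact (dotProduct_mulVec _ A v.ofLp).trans (dotProduct_comm _ _)

theorem HasGradientAt.sub {F : Type*} [NormedAddCommGroup F] [InnerProductSpace ℝ F]
    [CompleteSpace F] {f g : F → ℝ} {f' g' x : F} (hf : HasGradientAt f f' x)
    (hg : HasGradientAt g g' x) : HasGradientAt (fun y => f y - g y) (f' - g') x := by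
  rw [hasGradientAt_iff_hasFDerivAt] at *
  rw [map_sub]
  exact hf.sub hg

theorem hasGradientAt_norm_sq_div_two {F : Type*} [NormedAddCommGroup F]
    [InnerProductSpace ℝ F] [CompleteSpace F] (x : F) :
    HasGradientAt (fun y => ‖y‖ ^ 2 / 2) x x := by
  rw [hasGradientAt_iff_hasFDerivAt]
  refine (((hasStrictFDerivAt_norm_sq x).hasFDerivAt.const_smul (2⁻¹ : ℝ)).congr_fderiv
    ?_).congr_of_eventuallyEq (.of_forall fun y => ?_)
  · ext v
    simp
  · simp [div_eq_inv_mul]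

end

theorem gae_energy_gradient_general
    (Fn D M : ℕ)
    (WX WY : Matrix (Fin Fn) (Fin D) ℝ) (WH : Matrix (Fin M) (Fin Fn) ℝ)
    (x : Fin D → ℝ) (h H : ℝ → ℝ)
    (hH : ∀ t, HasDerivAt H (h t) t)
    (u : EuclideanSpace ℝ (Fin D) → (Fin M → ℝ))
    (hu : ∀ y, u y = WH.mulVec ((WY.mulVec (fun i => y i)) * (WX.mulVec x)))
    (r : EuclideanSpace ℝ (Fin D) → (Fin D → ℝ))
    (hr : ∀ y, r y = WY.transpose.mulVec
      ((WX.mulVec x) * WH.transpose.mulVec (fun m => h (u y m))))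
    (E : EuclideanSpace ℝ (Fin D) → ℝ)
    (hE : ∀ y, E y = (∑ k, H (u y k)) - ‖y‖ ^ 2 / 2) :
    ∀ y : EuclideanSpace ℝ (Fin D),
      HasGradientAt E (WithLp.toLp 2 (fun i => r y i - y i : Fin D → ℝ) :
        EuclideanSpace ℝ (Fin D)) y := by
  intro y
  set A := WH * diagonal (WX *ᵥ x) * WY
  have hu_A : ∀ y : EuclideanSpace ℝ (Fin D), u y = A *ᵥ y.ofLp := fun y => by
    rw [hu, mul_diagonal_mul_mulVec]
  have hr_A : r y = Aᵀ *ᵥ fun k => h ((A *ᵥ y.ofLp) k) := by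
    rw [hr, transpose_mul_diagonal_mul_mulVec, ← hu_A]
  have hE_A : E = fun y => ∑ k, H ((A *ᵥ y.ofLp) k) - ‖y‖ ^ 2 / 2 := funext fun y => by
    rw [hE, hu_A]
  have hgrad : (WithLp.toLp 2 (fun i => r y i - y i) : EuclideanSpace ℝ (Fin D)) =
      WithLp.toLp 2 (Aᵀ *ᵥ fun k => h ((A *ᵥ y.ofLp) k)) - y := by
    rw [hr_A]
    rfl
  rw [hE_A, hgrad]
  exact (hasGradientAt_sum_comp_mulVec hH A y).sub (hasGradientAt_norm_sq_div_two y)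

/-- The GAE energy `E(y) = Σ_k H(u_k(y)) - ‖y‖²/2`, where `H` is an
antiderivative of the activation `h` and `u(y) = Wʰ((Wʸy) ⊙ (Wˣx))`, satisfies
`∇E(y) = r(y|x) - y` with `r(y|x) = (Wʸ)ᵀ((Wˣx) ⊙ (Wʰ)ᵀ h(u(y)))`. -/
theorem gae_energy_gradient
    (Fn D M : ℕ)
    (WX WY : Matrix (Fin Fn) (Fin D) ℝ) (WH : Matrix (Fin M) (Fin Fn) ℝ)
    (x : Fin D → ℝ) (h H : ℝ → ℝ) (hcont : Continuous h)
    (hH : ∀ t, HasDerivAt H (h t) t)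
    (u : EuclideanSpace ℝ (Fin D) → (Fin M → ℝ))
    (hu : ∀ y, u y = WH.mulVec ((WY.mulVec (fun i => y i)) * (WX.mulVec x)))
    (r : EuclideanSpace ℝ (Fin D) → (Fin D → ℝ))
    (hr : ∀ y, r y = WY.transpose.mulVec
      ((WX.mulVec x) * WH.transpose.mulVec (fun m => h (u y m))))
    (E : EuclideanSpace ℝ (Fin D) → ℝ)
    (hE : ∀ y, E y = (∑ k, H (u y k)) - ‖y‖ ^ 2 / 2) :
    ∀ y : EuclideanSpace ℝ (Fin D),
      HasGradientAt E (WithLp.toLp 2 (fun i => r y i - y i : Fin D → ℝ) :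
        EuclideanSpace ℝ (Fin D)) y :=
  gae_energy_gradient_general Fn D M WX WY WH x h H hH u hu r hr E hE
end
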